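/- Let r ≥ 1 and let S be a 2^r-divisible set of exactly 2^{r+1} points in PG(v-1,2). Then S is the point set of an affine (r+1)-space, i.e., there is an (r+2)-dimensional subspace U of F_2^v and a hyperplane of U such that S consists of the 2^{r+1} vectors of U outside that hyperplane. In particular, S contains no line. -/

import Mathlib

/-!
Write `n φ` for the number of points of `S` off the hyperplane `ker φ`. Divisibility and
`#S = 2 ^ (r + 1)` force every `n φ` to be `0`, `2 ^ r` or `2 ^ (r + 1)`. Each point lies off
half of all hyperplanes, so `n φ` has mean `2 ^ r` over all functionals; as `n 0 = 0`, some `ψ`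
has `n ψ = 2 ^ (r + 1)`, i.e. `S` lies in the affine hyperplane `ψ = 1`. If some `y ∈ span S` with
`ψ y = 1` were missing from `S`, then averaging over the functionals with `φ y = 1` (two distinct
nonzero points lie off a quarter of all hyperplanes together) again gives mean `2 ^ r`; but all
these `n φ` are nonzero, hence at least `2 ^ r`, and `n ψ` is larger. So `S` is the half of
`span S` where `ψ = 1`, a translate of the hyperplane `span S ∩ ker ψ` of `span S`.
-/

open Classical Module

open Finset

theorem AddMonoidHom.card_mul_card_fiber_of_surjective {G M : Type*} [AddGroup G] [Fintype G]
    [AddMonoid M] [Fintype M] [DecidableEq M] (f : G →+ M) (hf : Function.Surjective f)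
    (m : M) : Fintype.card M * #{g | f g = m} = Fintype.card G :=
  calc Fintype.card M * #{g | f g = m} = ∑ m' : M, #{g | f g = m'} := by
        rw [← card_univ, ← smul_eq_mul, ← sum_const]
        exact sum_congr rfl fun m' _ => AddMonoidHom.card_fiber_eq_of_mem_range f (hf m) (hf m')
    _ = Fintype.card G := (card_eq_sum_card_fiberwise fun _ _ => mem_univ _).symm

theorem Nat.eq_zero_or_eq_or_eq_two_mul_of_dvd_of_le {m n : ℕ} (h : m ∣ n) (hn : n ≤ 2 * m) :
    n = 0 ∨ n = m ∨ n = 2 * m := by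
  obtain ⟨k, rfl⟩ := h
  rcases Nat.eq_zero_or_pos m with rfl | hm
  · simp
  have : k ≤ 2 := le_of_mul_le_mul_left (mul_comm 2 m ▸ hn) hm
  interval_cases k <;> simp [mul_comm]

theorem ZMod.ne_zero_iff_eq_one {a : ZMod 2} : a ≠ 0 ↔ a = 1 := by
  revert a; decide

variable {V : Type*} [AddCommGroup V]

section Field

variable {K : Type*} [Field K] [Module K V]

theorem LinearIndependent.exists_dual_apply_eq {ι : Type*} [Fintype ι] {b : ι → V}
    (hb : LinearIndependent K b) (t : ι → K) : ∃ φ : Dual K V, ∀ i, φ (b i) = t i := by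
  obtain ⟨φ, hφ⟩ := LinearMap.dualMap_surjective_of_injective
    (linearIndependent_iff_injective_fintypeLinearCombination.mp hb)
    (Fintype.linearCombination K t)
  exact ⟨φ, fun i => by simpa using LinearMap.congr_fun hφ (Pi.single i 1)⟩

theorem LinearIndependent.card_mul_card_dual_apply_eq [Fintype K] [Fintype (Dual K V)]
    {ι : Type*} [Fintype ι] {b : ι → V} (hb : LinearIndependent K b) (t : ι → K) :
    Fintype.card K ^ Fintype.card ι * #{φ : Dual K V | ∀ i, φ (b i) = t i} =
      Fintype.card (Dual K V) := by
  let f : Dual K V →+ (ι → K) :=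
    { toFun φ i := φ (b i), map_zero' := rfl, map_add' _ _ := rfl }
  have hf : Function.Surjective f := fun t => (hb.exists_dual_apply_eq t).imp fun _ h => funext h
  rw [← Fintype.card_fun, ← f.card_mul_card_fiber_of_surjective hf t]
  simp [f, funext_iff]

end Field

section Binary

variable [Module (ZMod 2) V]

theorem sum_card_filter_apply_ne_zero_comm (S : Finset V) (P : Finset (Dual (ZMod 2) V)) :
    ∑ φ ∈ P, #{x ∈ S | φ x ≠ 0} = ∑ x ∈ S, #{φ ∈ P | φ x ≠ 0} :=
  sum_card_bipartiteAbove_eq_sum_card_bipartiteBelow _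

theorem Submodule.image_add_inf_ker {U : Submodule (ZMod 2) V} {ψ : Dual (ZMod 2) V} {s : V}
    (hsU : s ∈ U) (hψs : ψ s = 1) :
    (s + ·) '' ((U ⊓ LinearMap.ker ψ : Submodule (ZMod 2) V) : Set V) = {x | x ∈ U ∧ ψ x ≠ 0} := by
  ext x
  simp only [Set.mem_image, SetLike.mem_coe, Submodule.mem_inf, LinearMap.mem_ker,
    Set.mem_ofPred_eq]
  constructor
  · rintro ⟨h, ⟨hhU, hψh⟩, rfl⟩
    exact ⟨U.add_mem hsU hhU, by simp [hψs, hψh]⟩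
  · rintro ⟨hxU, hψx⟩
    refine ⟨s + x, ⟨U.add_mem hsU hxU, ?_⟩, by rw [← add_assoc, ZModModule.add_self, zero_add]⟩
    rw [map_add, hψs, ZMod.ne_zero_iff_eq_one.mp hψx]
    rfl

theorem Submodule.finrank_eq_of_ncard_eq_two_pow [Module.Finite (ZMod 2) V]
    {W : Submodule (ZMod 2) V} {n : ℕ} (h : (W : Set V).ncard = 2 ^ n) :
    finrank (ZMod 2) W = n := by
  rw [← Nat.card_coe_set_eq] at h
  change Nat.card W = 2 ^ n at h
  rw [Module.natCard_eq_pow_finrank (K := ZMod 2), Nat.card_zmod] at h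
  exact Nat.pow_right_injective le_rfl h

theorem finrank_inf_ker_eq_and_finrank_eq [Module.Finite (ZMod 2) V] {S : Finset V}
    {U : Submodule (ZMod 2) V} {ψ : Dual (ZMod 2) V}
    (hS : (S : Set V) = {x | x ∈ U ∧ x ∉ U ⊓ LinearMap.ker ψ}) {k : ℕ} (hcard : #S = 2 ^ k) :
    finrank (ZMod 2) ↥(U ⊓ LinearMap.ker ψ) = k ∧ finrank (ZMod 2) U = k + 1 := by
  set H := U ⊓ LinearMap.ker ψ
  have hS' : (S : Set V) = {x | x ∈ U ∧ ψ x ≠ 0} := by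
    rw [hS]; ext x; simp +contextual [H]
  obtain ⟨s, hs⟩ : S.Nonempty := card_pos.mp (hcard ▸ Nat.two_pow_pos k)
  have hsU : s ∈ U ∧ ψ s ≠ 0 := by simpa [hS'] using mem_coe.mpr hs
  have hH : (H : Set V).ncard = 2 ^ k := by
    rw [← hcard, ← Set.ncard_coe_finset, hS', ← Submodule.image_add_inf_ker hsU.1
      (ZMod.ne_zero_iff_eq_one.mp hsU.2), Set.ncard_image_of_injective _ (add_right_injective s)]
  have hU : (U : Set V).ncard = 2 ^ (k + 1) := by
    have : Finite V := Module.finite_of_finite (ZMod 2)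
    have hdiff : (U : Set V) \ H = S := hS.symm
    rw [← Set.ncard_sdiff_add_ncard_of_subset (s := (H : Set V)) inf_le_left, hdiff,
      Set.ncard_coe_finset, hcard, hH, pow_succ, mul_two]
  exact ⟨Submodule.finrank_eq_of_ncard_eq_two_pow hH, Submodule.finrank_eq_of_ncard_eq_two_pow hU⟩

def IsDivisible (S : Finset V) (m : ℕ) : Prop :=
  ∀ φ : Dual (ZMod 2) V, φ ≠ 0 → m ∣ #{x ∈ S | φ x ≠ 0}

theorem IsDivisible.card_filter_apply_ne_zero_eq_zero_or_eq_or_eq {S : Finset V} {r : ℕ}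
    (hdiv : IsDivisible S (2 ^ r)) (hcard : #S = 2 ^ (r + 1)) (φ : Dual (ZMod 2) V) :
    #{x ∈ S | φ x ≠ 0} = 0 ∨ #{x ∈ S | φ x ≠ 0} = 2 ^ r ∨ #{x ∈ S | φ x ≠ 0} = 2 ^ (r + 1) := by
  rcases eq_or_ne φ 0 with rfl | hφ
  · simp
  rw [pow_succ']
  exact Nat.eq_zero_or_eq_or_eq_two_mul_of_dvd_of_le (hdiv φ hφ)
    ((card_filter_le _ _).trans (hcard.trans (pow_succ' 2 r)).le)

variable [Fintype (Dual (ZMod 2) V)]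

theorem two_mul_card_dual_apply_ne_zero {x : V} (hx : x ≠ 0) :
    2 * #{φ : Dual (ZMod 2) V | φ x ≠ 0} = Fintype.card (Dual (ZMod 2) V) := by
  have := (linearIndependent_unique_iff (R := ZMod 2) (v := fun _ : Unit => x)).mpr hx
    |>.card_mul_card_dual_apply_eq (fun _ => (1 : ZMod 2))
  simpa [ZMod.ne_zero_iff_eq_one] using this

theorem four_mul_card_dual_apply_ne_zero_and {x y : V} (hx : x ≠ 0) (hy : y ≠ 0) (hxy : x ≠ y) :
    4 * #{φ : Dual (ZMod 2) V | φ x ≠ 0 ∧ φ y ≠ 0} = Fintype.card (Dual (ZMod 2) V) := by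
  have hb : LinearIndependent (ZMod 2) ![x, y] := by
    refine (LinearIndependent.pair_iff' hx).mpr fun a => ?_
    rcases (by decide : ∀ a : ZMod 2, a = 0 ∨ a = 1) a with rfl | rfl
    · simpa using hy.symm
    · simpa using hxy
  have := hb.card_mul_card_dual_apply_eq (fun _ => (1 : ZMod 2))
  simpa [ZMod.ne_zero_iff_eq_one, Fin.forall_fin_two] using this

theorem two_mul_sum_card_filter_apply_ne_zero {S : Finset V} (h0 : ∀ x ∈ S, x ≠ 0) :
    2 * ∑ φ : Dual (ZMod 2) V, #{x ∈ S | φ x ≠ 0} = #S * Fintype.card (Dual (ZMod 2) V) := by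
  rw [sum_card_filter_apply_ne_zero_comm, mul_sum]
  exact sum_const_nat fun x hx => two_mul_card_dual_apply_ne_zero (h0 x hx)

theorem four_mul_sum_card_filter_apply_ne_zero_of_notMem {S : Finset V} (h0 : ∀ x ∈ S, x ≠ 0)
    {y : V} (hy : y ≠ 0) (hyS : y ∉ S) :
    4 * ∑ φ : Dual (ZMod 2) V with φ y ≠ 0, #{x ∈ S | φ x ≠ 0} =
      #S * Fintype.card (Dual (ZMod 2) V) := by
  rw [sum_card_filter_apply_ne_zero_comm, mul_sum]
  refine sum_const_nat fun x hx => ?_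
  rw [filter_filter,
    ← four_mul_card_dual_apply_ne_zero_and hy (h0 x hx) (ne_of_mem_of_not_mem hx hyS).symm]

namespace IsDivisible

variable {S : Finset V} {r : ℕ}

theorem exists_dual_forall_apply_eq_one (h0 : ∀ x ∈ S, x ≠ 0) (hdiv : IsDivisible S (2 ^ r))
    (hcard : #S = 2 ^ (r + 1)) : ∃ ψ : Dual (ZMod 2) V, ∀ x ∈ S, ψ x = 1 := by
  by_contra! h
  have hle : ∀ φ : Dual (ZMod 2) V, #{x ∈ S | φ x ≠ 0} ≤ 2 ^ r := fun φ => by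
    obtain ⟨x, hx, hφx⟩ := h φ
    have : #{x ∈ S | φ x ≠ 0} ≠ #S :=
      card_filter_eq_iff.not.mpr fun h => hφx (ZMod.ne_zero_iff_eq_one.mp (h x hx))
    have := pow_succ 2 r
    rcases hdiv.card_filter_apply_ne_zero_eq_zero_or_eq_or_eq hcard φ with h | h | h <;> omega
  have hlt : ∑ φ : Dual (ZMod 2) V, #{x ∈ S | φ x ≠ 0} < ∑ _ : Dual (ZMod 2) V, 2 ^ r :=
    sum_lt_sum (fun φ _ => hle φ) ⟨0, mem_univ _, by simp⟩
  have hsum := two_mul_sum_card_filter_apply_ne_zero h0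
  rw [sum_const, card_univ, smul_eq_mul] at hlt
  rw [hcard, pow_succ] at hsum
  linarith

theorem mem_of_mem_span (h0 : ∀ x ∈ S, x ≠ 0) (hdiv : IsDivisible S (2 ^ r))
    (hcard : #S = 2 ^ (r + 1)) {ψ : Dual (ZMod 2) V} (hψ : ∀ x ∈ S, ψ x = 1) {y : V}
    (hy : y ∈ Submodule.span (ZMod 2) (S : Set V)) (hψy : ψ y ≠ 0) : y ∈ S := by
  by_contra hyS
  have hy0 : y ≠ 0 := by rintro rfl; exact hψy (map_zero ψ)
  have hge : ∀ φ ∈ ({φ | φ y ≠ 0} : Finset (Dual (ZMod 2) V)), 2 ^ r ≤ #{x ∈ S | φ x ≠ 0} := by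
    intro φ hφ
    have : #{x ∈ S | φ x ≠ 0} ≠ 0 := fun h => (mem_filter.mp hφ).2 <| LinearMap.mem_ker.mp <|
      Submodule.span_le.mpr (fun x hx => by simpa using card_filter_eq_zero_iff.mp h x hx) hy
    have := pow_succ 2 r
    rcases hdiv.card_filter_apply_ne_zero_eq_zero_or_eq_or_eq hcard φ with h | h | h <;> omega
  have hψS : #{x ∈ S | ψ x ≠ 0} = 2 ^ (r + 1) := by
    rw [← hcard, card_filter_eq_iff]
    exact fun x hx => by simp [hψ x hx]
  have hlt : ∑ _ ∈ ({φ | φ y ≠ 0} : Finset (Dual (ZMod 2) V)), 2 ^ r <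
      ∑ φ : Dual (ZMod 2) V with φ y ≠ 0, #{x ∈ S | φ x ≠ 0} :=
    sum_lt_sum hge ⟨ψ, by simpa using hψy, hψS ▸ Nat.pow_lt_pow_succ one_lt_two⟩
  have hsum := four_mul_sum_card_filter_apply_ne_zero_of_notMem h0 hy0 hyS
  have hhalf := two_mul_card_dual_apply_ne_zero hy0
  rw [sum_const, smul_eq_mul] at hlt
  rw [hcard, ← hhalf, pow_succ] at hsum
  linarith

theorem coe_eq_setOf_mem_span_and_notMem_inf_ker (h0 : ∀ x ∈ S, x ≠ 0)
    (hdiv : IsDivisible S (2 ^ r)) (hcard : #S = 2 ^ (r + 1)) {ψ : Dual (ZMod 2) V}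
    (hψ : ∀ x ∈ S, ψ x = 1) :
    (S : Set V) = {x | x ∈ Submodule.span (ZMod 2) (S : Set V) ∧
      x ∉ Submodule.span (ZMod 2) (S : Set V) ⊓ LinearMap.ker ψ} := by
  ext x
  simp only [Set.mem_ofPred_eq, Submodule.mem_inf, LinearMap.mem_ker, not_and]
  refine ⟨fun hx => ⟨Submodule.subset_span hx, fun _ => by simp [hψ x hx]⟩, fun ⟨hxU, hψx⟩ => ?_⟩
  exact hdiv.mem_of_mem_span h0 hcard hψ hxU (hψx hxU)

end IsDivisible

end Binary

theorem divisible_card_pow_is_affine_space_general (v r : ℕ)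
    (S : Finset (Fin v → ZMod 2)) (h0 : ∀ x ∈ S, x ≠ 0)
    (hdiv : ∀ φ : (Fin v → ZMod 2) →ₗ[ZMod 2] ZMod 2, φ ≠ 0 →
      2 ^ r ∣ (S.filter (fun x => φ x ≠ 0)).card)
    (hcard : S.card = 2 ^ (r + 1)) :
    (∃ U H : Submodule (ZMod 2) (Fin v → ZMod 2), H ≤ U ∧
      finrank (ZMod 2) ↥U = r + 2 ∧ finrank (ZMod 2) ↥H = r + 1 ∧
      (S : Set (Fin v → ZMod 2)) = {x | x ∈ U ∧ x ∉ H}) ∧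
    (∀ a ∈ S, ∀ b ∈ S, a ≠ b → a + b ∉ S) := by
  have : Finite (Dual (ZMod 2) (Fin v → ZMod 2)) := Module.finite_of_finite (ZMod 2)
  have := Fintype.ofFinite (Dual (ZMod 2) (Fin v → ZMod 2))
  obtain ⟨ψ, hψ⟩ := IsDivisible.exists_dual_forall_apply_eq_one h0 hdiv hcard
  have hS := IsDivisible.coe_eq_setOf_mem_span_and_notMem_inf_ker h0 hdiv hcard hψ
  obtain ⟨hH, hU⟩ := finrank_inf_ker_eq_and_finrank_eq hS hcard
  refine ⟨⟨_, _, inf_le_left, hU, hH, hS⟩, fun a ha b hb _ hab => ?_⟩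
  have := hψ _ hab
  rw [map_add, hψ a ha, hψ b hb] at this
  exact absurd this (by decide)

/-- Every 2^r-divisible set of exactly 2^(r+1) points in PG(v-1,2) is the point
set of an affine (r+1)-space; in particular it contains no line. -/
theorem divisible_card_pow_is_affine_space (v r : ℕ) (hr : 1 ≤ r)
    (S : Finset (Fin v → ZMod 2)) (h0 : ∀ x ∈ S, x ≠ 0)
    (hdiv : ∀ φ : (Fin v → ZMod 2) →ₗ[ZMod 2] ZMod 2, φ ≠ 0 →
      2 ^ r ∣ (S.filter (fun x => φ x ≠ 0)).card)
    (hcard : S.card = 2 ^ (r + 1)) :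
    (∃ U H : Submodule (ZMod 2) (Fin v → ZMod 2), H ≤ U ∧
      finrank (ZMod 2) ↥U = r + 2 ∧ finrank (ZMod 2) ↥H = r + 1 ∧
      (S : Set (Fin v → ZMod 2)) = {x | x ∈ U ∧ x ∉ H}) ∧
    (∀ a ∈ S, ∀ b ∈ S, a ≠ b → a + b ∉ S) :=
  divisible_card_pow_is_affine_space_general v r S h0 hdiv hcard
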